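/- Fix L > 0, a continuous function W : [0,L] → ℝ with sup norm ‖W‖, an integer q ≥ 2 and α ∈ ℝ. Define s(λ) = sin(√λ L)/√λ + ∑_{k=1}^∞ S_k(λ), c(λ) = cos(√λ L) + ∑_{k=1}^∞ g_k(λ), and w(λ) = (q+1)c(λ) + α s(λ). Then there exists λ₀ > 0 (depending on L, ‖W‖, q, α) such that for every λ ≥ λ₀ with |w(λ)| ≤ 2√q, one has sin²(√λ L) ≥ (q−1)²/(4(q+1)²). -/

import Mathlib

open MeasureTheory Real Set

/-- The simplex `Δ_k = {0 ≤ t₁ ≤ ⋯ ≤ t_k ≤ L}` in `ℝ^k`. -/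
def simplexSet (L : ℝ) (k : ℕ) : Set (Fin k → ℝ) :=
  {t | Monotone t ∧ ∀ i, t i ∈ Set.Icc (0:ℝ) L}

/-- The extended sequence `(0, t₁, …, t_k, L)` of length `k+2`. -/
def extSeq (L : ℝ) {k : ℕ} (t : Fin k → ℝ) : Fin (k+2) → ℝ :=
  Fin.snoc (Fin.cons 0 t) L

/-- `S_k(λ) = ∫_{Δ_k} λ^{−(k+1)/2} ∏_{j=0}^{k} sin(√λ(t_{j+1}−t_j)) ∏_{j=1}^{k} W(t_j) dt`. -/
noncomputable def Sfun (L : ℝ) (W : ℝ → ℝ) (k : ℕ) (lam : ℝ) : ℝ :=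
  ∫ t in simplexSet L k,
    lam ^ (-((k:ℝ)+1)/2) *
      (∏ j : Fin (k+1),
        Real.sin (Real.sqrt lam * (extSeq L t j.succ - extSeq L t j.castSucc))) *
      ∏ j : Fin k, W (t j)

/-- `g_k(λ) = ∫_{Δ_k} λ^{−k/2} cos(√λ t₁) ∏_{j=1}^{k} sin(√λ(t_{j+1}−t_j)) ∏_{j=1}^{k} W(t_j) dt`. -/
noncomputable def Gfun (L : ℝ) (W : ℝ → ℝ) (k : ℕ) (lam : ℝ) : ℝ :=
  ∫ t in simplexSet L k,
    lam ^ (-(k:ℝ)/2) * Real.cos (Real.sqrt lam * extSeq L t 1) *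
      (∏ j : Fin k,
        Real.sin (Real.sqrt lam * (extSeq L t j.succ.succ - extSeq L t j.succ.castSucc))) *
      ∏ j : Fin k, W (t j)

/-- `s(λ) = sin(√λ L)/√λ + ∑_{k=1}^∞ S_k(λ)`. -/
noncomputable def sfun (L : ℝ) (W : ℝ → ℝ) (lam : ℝ) : ℝ :=
  Real.sin (Real.sqrt lam * L) / Real.sqrt lam + ∑' k : ℕ, Sfun L W (k+1) lam

/-- `c(λ) = cos(√λ L) + ∑_{k=1}^∞ g_k(λ)`. -/
noncomputable def cfun (L : ℝ) (W : ℝ → ℝ) (lam : ℝ) : ℝ :=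
  Real.cos (Real.sqrt lam * L) + ∑' k : ℕ, Gfun L W (k+1) lam

/-- `w(λ) = (q+1)c(λ) + α s(λ)`. -/
noncomputable def wfun (L : ℝ) (W : ℝ → ℝ) (q : ℕ) (α : ℝ) (lam : ℝ) : ℝ :=
  ((q:ℝ)+1) * cfun L W lam + α * sfun L W lam

/-!
The `k`-th terms of the series for `s` and `c` are integrals over `Δ_k`, a set of volume at most
`L ^ k`, of integrands bounded by `λ^{-(k+1)/2} M^k` and `λ^{-k/2} M^k`. Once `√λ ≥ 2ML` both series
are dominated by geometric series of ratio `ML/√λ ≤ 1/2`, so `s(λ) = O(λ^{-1/2})` and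
`c(λ) = cos(√λ L) + O(λ^{-1/2})`. Hence `|w(λ)| ≤ 2√q` forces `|cos(√λ L)| ≤ a + O(λ^{-1/2})` with
`a = 2√q/(q+1)`, and `1 - a² = ((q-1)/(q+1))²` leaves room to absorb the error term for large `λ`.
-/

lemma zero_mem_simplexSet {L : ℝ} (hL : 0 ≤ L) (k : ℕ) : (0 : Fin k → ℝ) ∈ simplexSet L k :=
  ⟨monotone_const, fun _ => ⟨le_rfl, hL⟩⟩

lemma volume_simplexSet_le {L : ℝ} (hL : 0 ≤ L) (k : ℕ) :
    volume (simplexSet L k) ≤ ENNReal.ofReal (L ^ k) :=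
  calc volume (simplexSet L k) ≤ volume (Set.pi univ fun _ : Fin k => Icc (0:ℝ) L) :=
        measure_mono fun t ht i _ => ht.2 i
    _ = ENNReal.ofReal (L ^ k) := by
        rw [volume_pi_pi, Finset.prod_const, Real.volume_Icc, sub_zero, Finset.card_univ,
          Fintype.card_fin, ENNReal.ofReal_pow hL]

lemma norm_setIntegral_simplexSet_le {E : Type*} [NormedAddCommGroup E] [NormedSpace ℝ E]
    {L C : ℝ} (hL : 0 ≤ L) {k : ℕ} {f : (Fin k → ℝ) → E}
    (hf : ∀ t ∈ simplexSet L k, ‖f t‖ ≤ C) :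
    ‖∫ t in simplexSet L k, f t‖ ≤ C * L ^ k := by
  have hC : 0 ≤ C := (norm_nonneg _).trans (hf 0 (zero_mem_simplexSet hL k))
  have hvol := volume_simplexSet_le hL k
  calc ‖∫ t in simplexSet L k, f t‖ ≤ C * volume.real (simplexSet L k) :=
        norm_setIntegral_le_of_norm_le_const (hvol.trans_lt ENNReal.ofReal_lt_top) hf
    _ ≤ C * L ^ k := by
        gcongr
        exact ENNReal.toReal_le_of_le_ofReal (by positivity) hvol

lemma rpow_neg_div_two_eq_inv_sqrt_pow {x : ℝ} (hx : 0 ≤ x) (n : ℕ) :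
    x ^ (-(n : ℝ) / 2) = (√x)⁻¹ ^ n := by
  rw [Real.rpow_div_two_eq_sqrt _ hx, Real.rpow_neg (Real.sqrt_nonneg x), Real.rpow_natCast,
    inv_pow]

lemma abs_prod_sin_le_one {ι : Type*} (s : Finset ι) (f : ι → ℝ) :
    |∏ i ∈ s, Real.sin (f i)| ≤ 1 := by
  rw [Finset.abs_prod]
  exact Finset.prod_le_one (fun _ _ => abs_nonneg _) fun _ _ => Real.abs_sin_le_one _

lemma norm_tsum_le_of_norm_le_geometric {E : Type*} [SeminormedAddCommGroup E] {f : ℕ → E}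
    {C ρ : ℝ} (hρ : 0 ≤ ρ) (hρ2 : ρ ≤ 1 / 2) (hf : ∀ k, ‖f k‖ ≤ C * ρ ^ (k + 1)) :
    ‖∑' k, f k‖ ≤ 2 * C * ρ := by
  have hCρ : 0 ≤ C * ρ := by simpa using (norm_nonneg _).trans (hf 0)
  have hsum := (hasSum_geometric_of_lt_one hρ (by linarith)).mul_left (C * ρ)
  calc ‖∑' k, f k‖ ≤ C * ρ * (1 - ρ)⁻¹ :=
        tsum_of_norm_bounded hsum fun k => (hf k).trans_eq (by ring)
    _ ≤ C * ρ * 2 := by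
        gcongr
        rw [inv_le_comm₀ (by linarith) two_pos]
        linarith
    _ = 2 * C * ρ := by ring

section Bounds

variable {L M : ℝ} {W : ℝ → ℝ}

lemma abs_prod_le_pow_of_mem_simplexSet (hM : ∀ x ∈ Icc (0:ℝ) L, |W x| ≤ M) {k : ℕ}
    {t : Fin k → ℝ} (ht : t ∈ simplexSet L k) :
    |∏ j, W (t j)| ≤ M ^ k := by
  rw [Finset.abs_prod]
  simpa using Finset.prod_le_prod (s := Finset.univ) (fun j _ => abs_nonneg _)
    fun j _ => hM _ (ht.2 j)

lemma abs_Sfun_le (hL : 0 ≤ L) (hM : ∀ x ∈ Icc (0:ℝ) L, |W x| ≤ M) (k : ℕ) {lam : ℝ}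
    (hlam : 0 ≤ lam) : |Sfun L W k lam| ≤ (√lam)⁻¹ * (M * L / √lam) ^ k := by
  have hexp : lam ^ (-((k:ℝ) + 1) / 2) = (√lam)⁻¹ ^ (k + 1) := by
    rw [← rpow_neg_div_two_eq_inv_sqrt_pow hlam]; push_cast; rfl
  rw [← Real.norm_eq_abs, Sfun, hexp]
  calc _ ≤ (√lam)⁻¹ ^ (k + 1) * M ^ k * L ^ k := by
        refine norm_setIntegral_simplexSet_le hL fun t ht => ?_
        rw [Real.norm_eq_abs, abs_mul, abs_mul, abs_of_nonneg (by positivity)]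
        have := abs_prod_le_pow_of_mem_simplexSet hM ht
        gcongr
        calc _ ≤ (√lam)⁻¹ ^ (k + 1) * 1 := by gcongr; exact abs_prod_sin_le_one _ _
          _ = _ := mul_one _
    _ = _ := by ring

lemma abs_Gfun_le (hL : 0 ≤ L) (hM : ∀ x ∈ Icc (0:ℝ) L, |W x| ≤ M) (k : ℕ) {lam : ℝ}
    (hlam : 0 ≤ lam) : |Gfun L W k lam| ≤ (M * L / √lam) ^ k := by
  rw [← Real.norm_eq_abs, Gfun, rpow_neg_div_two_eq_inv_sqrt_pow hlam]
  calc _ ≤ (√lam)⁻¹ ^ k * M ^ k * L ^ k := by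
        refine norm_setIntegral_simplexSet_le hL fun t ht => ?_
        rw [Real.norm_eq_abs, abs_mul, abs_mul, abs_mul, abs_of_nonneg (by positivity)]
        have := abs_prod_le_pow_of_mem_simplexSet hM ht
        gcongr
        calc _ ≤ (√lam)⁻¹ ^ k * 1 * 1 := by
              gcongr
              · exact Real.abs_cos_le_one _
              · exact abs_prod_sin_le_one _ _
          _ = _ := by ring
    _ = _ := by ring

lemma abs_sfun_le (hL : 0 ≤ L) (hM : ∀ x ∈ Icc (0:ℝ) L, |W x| ≤ M) {lam : ℝ} (hlam : 0 ≤ lam)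
    (hML : 2 * M * L ≤ √lam) : |sfun L W lam| ≤ 2 / √lam := by
  have hM0 : 0 ≤ M := (abs_nonneg _).trans (hM 0 ⟨le_rfl, hL⟩)
  have hρ : M * L / √lam ≤ 1 / 2 := div_le_of_le_mul₀ (sqrt_nonneg _) (by norm_num) (by linarith)
  have htail : |∑' k, Sfun L W (k + 1) lam| ≤ 2 * (√lam)⁻¹ * (M * L / √lam) :=
    norm_tsum_le_of_norm_le_geometric (f := fun k => Sfun L W (k + 1) lam) (by positivity) hρ
      fun k => abs_Sfun_le hL hM _ hlam
  have hsin : |Real.sin (√lam * L) / √lam| ≤ 1 / √lam := by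
    rw [abs_div, abs_of_nonneg (sqrt_nonneg _)]
    exact div_le_div_of_nonneg_right (Real.abs_sin_le_one _) (sqrt_nonneg _)
  calc |sfun L W lam| ≤ 1 / √lam + 2 * (√lam)⁻¹ * (M * L / √lam) :=
        (abs_add_le _ _).trans (add_le_add hsin htail)
    _ ≤ 1 / √lam + 2 * (√lam)⁻¹ * (1 / 2) := by gcongr
    _ = 2 / √lam := by ring

lemma abs_cfun_sub_cos_le (hL : 0 ≤ L) (hM : ∀ x ∈ Icc (0:ℝ) L, |W x| ≤ M) {lam : ℝ}
    (hlam : 0 ≤ lam) (hML : 2 * M * L ≤ √lam) :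
    |cfun L W lam - Real.cos (√lam * L)| ≤ 2 * M * L / √lam := by
  have hM0 : 0 ≤ M := (abs_nonneg _).trans (hM 0 ⟨le_rfl, hL⟩)
  have hρ : M * L / √lam ≤ 1 / 2 := div_le_of_le_mul₀ (sqrt_nonneg _) (by norm_num) (by linarith)
  rw [cfun, add_sub_cancel_left]
  calc |∑' k, Gfun L W (k + 1) lam| ≤ 2 * 1 * (M * L / √lam) :=
        norm_tsum_le_of_norm_le_geometric (f := fun k => Gfun L W (k + 1) lam) (by positivity) hρ
          fun k => (abs_Gfun_le hL hM _ hlam).trans_eq (one_mul _).symm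
    _ = 2 * M * L / √lam := by ring

lemma mul_abs_cos_le_abs_wfun_add (hL : 0 ≤ L) (hM : ∀ x ∈ Icc (0:ℝ) L, |W x| ≤ M) {lam : ℝ}
    (hlam : 0 ≤ lam) (hML : 2 * M * L ≤ √lam) (q : ℕ) (α : ℝ) :
    ((q:ℝ) + 1) * |Real.cos (√lam * L)| ≤
      |wfun L W q α lam| + 2 * (|α| + ((q:ℝ) + 1) * (M * L)) / √lam := by
  have hQ : (0:ℝ) < (q:ℝ) + 1 := by positivity
  have hs := abs_sfun_le hL hM hlam hML
  have hc := abs_cfun_sub_cos_le hL hM hlam hML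
  calc ((q:ℝ) + 1) * |Real.cos (√lam * L)| = |((q:ℝ) + 1) * Real.cos (√lam * L)| := by
          rw [abs_mul, abs_of_pos hQ]
    _ = |wfun L W q α lam - α * sfun L W lam
            - ((q:ℝ) + 1) * (cfun L W lam - Real.cos (√lam * L))| := by
          congr 1; rw [wfun]; ring
    _ ≤ |wfun L W q α lam| + |α * sfun L W lam|
          + |((q:ℝ) + 1) * (cfun L W lam - Real.cos (√lam * L))| :=
          (abs_sub _ _).trans (add_le_add (abs_sub _ _) le_rfl)
    _ = |wfun L W q α lam| + |α| * |sfun L W lam|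
          + ((q:ℝ) + 1) * |cfun L W lam - Real.cos (√lam * L)| := by
          rw [abs_mul, abs_mul, abs_of_pos hQ]
    _ ≤ |wfun L W q α lam| + |α| * (2 / √lam) + ((q:ℝ) + 1) * (2 * M * L / √lam) := by
          gcongr
    _ = |wfun L W q α lam| + 2 * (|α| + ((q:ℝ) + 1) * (M * L)) / √lam := by ring

end Bounds

lemma one_sub_sq_sub_three_mul_le_sin_sq {x a δ : ℝ} (ha1 : a ≤ 1) (hδ : 0 ≤ δ)
    (hδ1 : δ ≤ 1) (h : |Real.cos x| ≤ a + δ) : 1 - a ^ 2 - 3 * δ ≤ Real.sin x ^ 2 := by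
  have hcos : Real.cos x ^ 2 ≤ (a + δ) ^ 2 := by
    rw [← sq_abs]; exact pow_le_pow_left₀ (abs_nonneg _) h 2
  nlinarith [Real.sin_sq_add_cos_sq x]

lemma sin_sq_ge_of_mul_abs_cos_le {x q : ℝ} (hq : 0 ≤ q)
    (h : (q + 1) * |Real.cos x| ≤ 2 * √q + (q + 1) * ((q - 1) ^ 2 / (4 * (q + 1) ^ 2))) :
    (q - 1) ^ 2 / (4 * (q + 1) ^ 2) ≤ Real.sin x ^ 2 := by
  have hQ : 0 < q + 1 := by linarith
  have hsq : √q ^ 2 = q := Real.sq_sqrt hq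
  have ha1 : 2 * √q / (q + 1) ≤ 1 := by
    rw [div_le_one hQ]; nlinarith [sq_nonneg (√q - 1)]
  have hδ1 : (q - 1) ^ 2 / (4 * (q + 1) ^ 2) ≤ 1 := by
    rw [div_le_one (by positivity)]; nlinarith
  have hcos : |Real.cos x| ≤ 2 * √q / (q + 1) + (q - 1) ^ 2 / (4 * (q + 1) ^ 2) := by
    rw [div_add' _ _ _ hQ.ne', le_div_iff₀ hQ]; linarith
  convert one_sub_sq_sub_three_mul_le_sin_sq ha1 (by positivity) hδ1 hcos using 1
  field_simp
  rw [hsq]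
  ring

theorem sin_lower_bound_on_spectrum_general (L : ℝ) (hL : 0 < L) (W : ℝ → ℝ)
    (M : ℝ) (hM : ∀ x ∈ Icc (0:ℝ) L, |W x| ≤ M)
    (q : ℕ) (hq : 2 ≤ q) (α : ℝ) :
    ∃ lam₀ : ℝ, 0 < lam₀ ∧
      ∀ lam : ℝ, lam₀ ≤ lam → |wfun L W q α lam| ≤ 2 * Real.sqrt q →
        ((q:ℝ)-1)^2 / (4 * ((q:ℝ)+1)^2) ≤ Real.sin (Real.sqrt lam * L) ^ 2 := by
  have hML0 : 0 ≤ M * L := mul_nonneg ((abs_nonneg _).trans (hM 0 ⟨le_rfl, hL.le⟩)) hL.le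
  set δ := ((q:ℝ) - 1) ^ 2 / (4 * ((q:ℝ) + 1) ^ 2)
  have hq1 : (1:ℝ) < q := by exact_mod_cast hq
  have hQδ : 0 < ((q:ℝ) + 1) * δ := by
    have : 0 < δ := div_pos (pow_pos (by linarith) 2) (by positivity)
    positivity
  set K := 2 * (|α| + ((q:ℝ) + 1) * (M * L))
  have hKδ : 0 ≤ K / (((q:ℝ) + 1) * δ) := by positivity
  set R := 2 * (M * L) + K / (((q:ℝ) + 1) * δ) + 1
  have hR : 0 < R := by linarith
  refine ⟨R ^ 2, by positivity, fun lam hlam hw => ?_⟩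
  have hlam0 : 0 ≤ lam := (sq_nonneg R).trans hlam
  have hRlam : R ≤ √lam := (Real.le_sqrt hR.le hlam0).2 hlam
  have hML : 2 * M * L ≤ √lam := by linarith
  have hK : K / √lam ≤ ((q:ℝ) + 1) * δ :=
    div_le_of_le_mul₀ (sqrt_nonneg _) hQδ.le ((div_le_iff₀' hQδ).1 (by linarith))
  refine sin_sq_ge_of_mul_abs_cos_le (Nat.cast_nonneg q) ?_
  linarith [mul_abs_cos_le_abs_wfun_add hL.le hM hlam0 hML q α]

/-- At high energy, `sin(√λ L)` is uniformly bounded away from `0` on the spectrum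
`{λ : |w(λ)| ≤ 2√q}`: there is `λ₀ > 0` such that for all `λ ≥ λ₀` with
`|w(λ)| ≤ 2√q`, one has `sin²(√λ L) ≥ (q−1)²/(4(q+1)²)`. -/
theorem sin_lower_bound_on_spectrum (L : ℝ) (hL : 0 < L) (W : ℝ → ℝ)
    (hW : ContinuousOn W (Icc 0 L)) (M : ℝ) (hM : ∀ x ∈ Icc (0:ℝ) L, |W x| ≤ M)
    (q : ℕ) (hq : 2 ≤ q) (α : ℝ) :
    ∃ lam₀ : ℝ, 0 < lam₀ ∧
      ∀ lam : ℝ, lam₀ ≤ lam → |wfun L W q α lam| ≤ 2 * Real.sqrt q →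
        ((q:ℝ)-1)^2 / (4 * ((q:ℝ)+1)^2) ≤ Real.sin (Real.sqrt lam * L) ^ 2 :=
  sin_lower_bound_on_spectrum_general L hL W M hM q hq α
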